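/- arXiv:1711.04020 — 2 statements merged into one kernel-verified Lean document; each statement's English description precedes it below -/
import Mathlib

section
/- Let S,T,F be pairwise commuting homeomorphisms of ℝ² (S,T the unit translations), let L ∈ SL(3,ℤ), and define U,V,G from the entries of L⁻¹ as U = S^{a₁}T^{b₁}F^{-c₁}, V = S^{a₂}T^{b₂}F^{-c₂}, G = S^{-a₃}T^{-b₃}F^{c₃}. Suppose the rotation set ρ_{S,T}(F) is disjoint from the affine line Φ L⁻¹(Δ_∞). Then ρ_{U,V}(G) = 𝐿̂(ρ_{S,T}(F)), where 𝐿̂ = Φ ∘ L ∘ Φ⁻¹ is the projective transformation restricted to the affine chart. -/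
open Filter Topology Pointwise

noncomputable section

/-- Natural iterates of a homeomorphism. -/
def hnpow {X : Type*} [TopologicalSpace X] (F : X ≃ₜ X) : ℕ → X ≃ₜ X
  | 0 => Homeomorph.refl X
  | n + 1 => (hnpow F n).trans F

/-- Integer iterates of a homeomorphism. -/
def hzpow {X : Type*} [TopologicalSpace X] (F : X ≃ₜ X) : ℤ → X ≃ₜ X
  | Int.ofNat n => hnpow F n
  | Int.negSucc n => hnpow F.symm (n + 1)

/-- `act U V G m n p = U^{-m} ∘ V^{-n} ∘ G^{p}`. -/
def act {X : Type*} [TopologicalSpace X] (U V G : X ≃ₜ X) (m n p : ℤ) : X ≃ₜ X :=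
  ((hzpow G p).trans (hzpow V (-n))).trans (hzpow U (-m))

/-- A sequence in `ℤ³` tends to infinity. -/
def tendsInfty (s : ℕ → ℤ × ℤ × ℤ) : Prop :=
  Tendsto (fun k => |(s k).1| + |(s k).2.1| + |(s k).2.2|) atTop atTop

/-- The rotation set of `G` with respect to `U` and `V`, defined via compact sets:
`w` belongs to it iff there are a compact `K` and `(m_k, n_k, p_k) ∈ ℤ³` tending to infinity
with `U^{-m_k} V^{-n_k} G^{p_k}(K) ∩ K ≠ ∅` and `(m_k/p_k, n_k/p_k) → w`. -/
def rotSet {X : Type*} [TopologicalSpace X] (G U V : X ≃ₜ X) : Set (ℝ × ℝ) :=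
  {w | ∃ K : Set X, IsCompact K ∧ ∃ s : ℕ → ℤ × ℤ × ℤ,
    (∀ k, ((act U V G (s k).1 (s k).2.1 (s k).2.2) '' K ∩ K).Nonempty) ∧
    tendsInfty s ∧
    Tendsto (fun k => ((((s k).1 : ℝ) / ((s k).2.2 : ℝ), ((s k).2.1 : ℝ) / ((s k).2.2 : ℝ)) : ℝ × ℝ))
      atTop (nhds w)}

/-- Two homeomorphisms commute. -/
def commuting {X : Type*} [TopologicalSpace X] (F G : X ≃ₜ X) : Prop := ∀ x, F (G x) = G (F x)

/-- The unit horizontal translation `S : (x,y) ↦ (x+1,y)`. -/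
def S2 : (ℝ × ℝ) ≃ₜ (ℝ × ℝ) := Homeomorph.addRight ((1 : ℝ), (0 : ℝ))

/-- The unit vertical translation `T : (x,y) ↦ (x,y+1)`. -/
def T2 : (ℝ × ℝ) ≃ₜ (ℝ × ℝ) := Homeomorph.addRight ((0 : ℝ), (1 : ℝ))

/-- The displacement set `D(H) = {H(z) - z : z ∈ ℝ²}`. -/
def disp (H : (ℝ × ℝ) ≃ₜ (ℝ × ℝ)) : Set (ℝ × ℝ) := Set.range fun z => H z - z

/-- `mk2 F a b c = S^a ∘ T^b ∘ F^{-c}`. -/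
def mk2 (F : (ℝ × ℝ) ≃ₜ (ℝ × ℝ)) (a b c : ℤ) : (ℝ × ℝ) ≃ₜ (ℝ × ℝ) :=
  ((hzpow F (-c)).trans (hzpow T2 b)).trans (hzpow S2 a)

/-- The projective action of an integer 3×3 matrix in the affine chart. -/
def lhatZ (L : Matrix (Fin 3) (Fin 3) ℤ) (p : ℝ × ℝ) : ℝ × ℝ :=
  (((L 0 0 : ℝ) * p.1 + (L 0 1 : ℝ) * p.2 + (L 0 2 : ℝ)) /
      ((L 2 0 : ℝ) * p.1 + (L 2 1 : ℝ) * p.2 + (L 2 2 : ℝ)),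
   ((L 1 0 : ℝ) * p.1 + (L 1 1 : ℝ) * p.2 + (L 1 2 : ℝ)) /
      ((L 2 0 : ℝ) * p.1 + (L 2 1 : ℝ) * p.2 + (L 2 2 : ℝ)))

/-!
Since `S`, `T`, `F` commute, `U^{-m} V^{-n} G^p = S^{-a} T^{-b} F^c` where
`(a, b, c) = L⁻¹ (m, n, p)`, so the return sequences defining `ρ_{U,V}(G)` are the images under `L⁻¹` of those defining
`ρ_{S,T}(F)`, and `(m/p, n/p) = 𝐿̂ (a/c, b/c)`. As `F` commutes with the integer translations,
`F - id` is bounded, so a return of `S^{-a} T^{-b} F^c` to a compact set forces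
`‖(a, b)‖ ≤ D |c| + C`: along a return sequence tending to infinity `c ≠ 0` eventually and the
vectors `(a/c, b/c)` stay bounded. Continuity of `𝐿̂` off the line `Φ L⁻¹(Δ_∞)` and
Bolzano–Weierstrass then give both inclusions.
-/

lemma hzpow_eq_zpow {X : Type*} [TopologicalSpace X] (F : X ≃ₜ X) (k : ℤ) : hzpow F k = F ^ k := by
  have hnpow_eq_pow : ∀ (H : X ≃ₜ X) (n : ℕ), hnpow H n = H ^ n := fun H n => by
    induction n with
    | zero => rfl
    | succ n ih => rw [pow_succ', ← ih]; rfl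
  cases k with
  | ofNat n => exact hnpow_eq_pow F n
  | negSucc n => rw [zpow_negSucc, ← inv_pow]; exact hnpow_eq_pow F⁻¹ (n + 1)

lemma act_eq_zpow {X : Type*} [TopologicalSpace X] (U V G : X ≃ₜ X) (m n p : ℤ) :
    act U V G m n p = U ^ (-m) * (V ^ (-n) * G ^ p) := by
  simp only [act, hzpow_eq_zpow]; rfl

lemma mk2_eq_zpow (F : (ℝ × ℝ) ≃ₜ (ℝ × ℝ)) (a b c : ℤ) :
    mk2 F a b c = S2 ^ a * (T2 ^ b * F ^ (-c)) := by
  simp only [mk2, hzpow_eq_zpow]; rfl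

lemma commute_of_commuting {X : Type*} [TopologicalSpace X] {F H : X ≃ₜ X} (h : commuting F H) :
    Commute F H :=
  Homeomorph.ext h

lemma commute_S2_T2 : Commute S2 T2 :=
  Homeomorph.ext fun z => add_right_comm z _ _

def actHom {α : Type*} [Group α] {u v g : α} (huv : Commute u v) (hug : Commute u g)
    (hvg : Commute v g) : Multiplicative (ℤ × ℤ × ℤ) →* α where
  toFun x := u ^ (-x.toAdd.1) * (v ^ (-x.toAdd.2.1) * g ^ x.toAdd.2.2)
  map_one' := by simp
  map_mul' x y := by
    simp only [toAdd_mul, Prod.fst_add, Prod.snd_add, neg_add, zpow_add]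
    rw [((huv.zpow_zpow _ _).mul_right (hug.zpow_zpow _ _)).symm.mul_mul_mul_comm,
      (hvg.zpow_zpow _ _).symm.mul_mul_mul_comm]

def mulVec3 (N : Matrix (Fin 3) (Fin 3) ℤ) (v : ℤ × ℤ × ℤ) : ℤ × ℤ × ℤ :=
  (N 0 0 * v.1 + N 0 1 * v.2.1 + N 0 2 * v.2.2,
   N 1 0 * v.1 + N 1 1 * v.2.1 + N 1 2 * v.2.2,
   N 2 0 * v.1 + N 2 1 * v.2.1 + N 2 2 * v.2.2)

lemma mulVec3_mulVec3 (A B : Matrix (Fin 3) (Fin 3) ℤ) (v : ℤ × ℤ × ℤ) :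
    mulVec3 A (mulVec3 B v) = mulVec3 (A * B) v := by
  simp only [mulVec3, Matrix.mul_apply, Fin.sum_univ_three, Prod.mk.injEq]
  refine ⟨?_, ?_, ?_⟩ <;> ring

lemma mulVec3_one (v : ℤ × ℤ × ℤ) : mulVec3 1 v = v := by
  simp [mulVec3]

def actVec {X : Type*} [TopologicalSpace X] (U V G : X ≃ₜ X) (v : ℤ × ℤ × ℤ) : X ≃ₜ X :=
  act U V G v.1 v.2.1 v.2.2

/-- `U`, `V`, `G` are the values of `(a, b, c) ↦ S^{-a} T^{-b} F^c` at `-M e₀`, `-M e₁`, `M e₂`. -/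
lemma actVec_mk2 (F : (ℝ × ℝ) ≃ₜ (ℝ × ℝ)) (hS : commuting F S2) (hT : commuting F T2)
    (M : Matrix (Fin 3) (Fin 3) ℤ) (v : ℤ × ℤ × ℤ) :
    actVec (mk2 F (M 0 0) (M 1 0) (M 2 0)) (mk2 F (M 0 1) (M 1 1) (M 2 1))
        (mk2 F (-(M 0 2)) (-(M 1 2)) (-(M 2 2))) v = actVec S2 T2 F (mulVec3 M v) := by
  set ψ := actHom commute_S2_T2 (commute_of_commuting hS).symm (commute_of_commuting hT).symm
  have hmk2 : ∀ a b c, mk2 F a b c = ψ (.ofAdd (-a, -b, -c)) := fun a b c => by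
    simp [mk2_eq_zpow, ψ, actHom]
  have hψ : ∀ v, actVec S2 T2 F v = ψ (.ofAdd v) := fun v => act_eq_zpow _ _ _ _ _ _
  rw [hψ, actVec, act_eq_zpow, hmk2, hmk2, hmk2, ← map_zpow ψ, ← map_zpow ψ, ← map_zpow ψ,
    ← map_mul ψ, ← map_mul ψ]
  congr 1
  ext <;> simp [mulVec3] <;> ring

lemma zpow_apply_eq_add_zsmul {E : Type*} [TopologicalSpace E] [AddCommGroup E] (H : E ≃ₜ E)
    {v : E} (hH : ∀ z, H z = z + v) (k : ℤ) (z : E) : (H ^ k) z = z + k • v := by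
  induction k using Int.induction_on generalizing z with
  | zero => simp
  | succ k ih =>
    rw [zpow_add_one, Homeomorph.mul_apply, hH, ih, add_smul, one_smul]
    abel
  | pred k ih =>
    have hinv : H⁻¹ z = z - v := by rw [Homeomorph.inv_apply, H.symm_apply_eq, hH, sub_add_cancel]
    rw [zpow_sub_one, Homeomorph.mul_apply, hinv, ih, sub_smul, one_smul]
    abel

lemma S2_zpow_mul_T2_zpow_apply (i j : ℤ) (z : ℝ × ℝ) :
    (S2 ^ i * T2 ^ j) z = z + ((i : ℝ), (j : ℝ)) := by
  rw [Homeomorph.mul_apply, zpow_apply_eq_add_zsmul _ (fun _ => rfl),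
    zpow_apply_eq_add_zsmul _ (fun _ => rfl), add_assoc]
  congr 1
  ext <;> simp

lemma act_S2_T2_apply (F : (ℝ × ℝ) ≃ₜ (ℝ × ℝ)) (a b c : ℤ) (z : ℝ × ℝ) :
    act S2 T2 F a b c z = (F ^ c) z - ((a : ℝ), (b : ℝ)) := by
  rw [act_eq_zpow, ← mul_assoc, Homeomorph.mul_apply, S2_zpow_mul_T2_zpow_apply]
  ext <;> simp [sub_eq_add_neg]

lemma apply_add_intCast {F : (ℝ × ℝ) ≃ₜ (ℝ × ℝ)} (hS : commuting F S2) (hT : commuting F T2)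
    (i j : ℤ) (z : ℝ × ℝ) : F (z + ((i : ℝ), (j : ℝ))) = F z + ((i : ℝ), (j : ℝ)) := by
  have h :=
    ((commute_of_commuting hS).zpow_right i).mul_right ((commute_of_commuting hT).zpow_right j)
  rw [← S2_zpow_mul_T2_zpow_apply, ← S2_zpow_mul_T2_zpow_apply]
  exact congrArg (fun H : (ℝ × ℝ) ≃ₜ (ℝ × ℝ) => H z) h.eq

lemma exists_norm_apply_sub_le {F : (ℝ × ℝ) ≃ₜ (ℝ × ℝ)} (hS : commuting F S2)
    (hT : commuting F T2) : ∃ D, ∀ z, ‖F z - z‖ ≤ D := by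
  obtain ⟨D, hD⟩ := (isCompact_Icc (a := ((0 : ℝ), (0 : ℝ))) (b := (1, 1)))
    |>.exists_bound_of_continuousOn (F.continuous.sub continuous_id).continuousOn
  refine ⟨D, fun z => ?_⟩
  have hz : z = (Int.fract z.1, Int.fract z.2) + ((⌊z.1⌋ : ℝ), (⌊z.2⌋ : ℝ)) := by
    ext <;> simp
  rw [hz, apply_add_intCast hS hT, add_sub_add_right_eq_sub]
  exact hD _ ⟨⟨Int.fract_nonneg _, Int.fract_nonneg _⟩, (Int.fract_lt_one _).le,
    (Int.fract_lt_one _).le⟩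

lemma norm_zpow_apply_sub_le {E : Type*} [SeminormedAddCommGroup E] (H : E ≃ₜ E) {D : ℝ}
    (hD : ∀ z, ‖H z - z‖ ≤ D) (k : ℤ) (z : E) : ‖(H ^ k) z - z‖ ≤ |(k : ℝ)| * D := by
  have hpow : ∀ (n : ℕ) z, ‖(H ^ n) z - z‖ ≤ n * D := by
    intro n
    induction n with
    | zero => simp
    | succ n ih =>
      intro z
      rw [pow_succ', Homeomorph.mul_apply, ← sub_add_sub_cancel _ ((H ^ n) z)]
      calc _ ≤ D + n * D := (norm_add_le _ _).trans (add_le_add (hD _) (ih z))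
        _ = (n + 1 : ℕ) * D := by push_cast; ring
  obtain ⟨n, rfl | rfl⟩ := Int.eq_nat_or_neg k
  · simpa using hpow n z
  · have h := hpow n ((H ^ (-(n : ℤ))) z)
    rw [← Homeomorph.mul_apply, ← zpow_natCast, ← zpow_add, add_neg_cancel, zpow_zero,
      Homeomorph.one_apply, norm_sub_rev] at h
    simpa using h

lemma exists_norm_le_of_returns {F : (ℝ × ℝ) ≃ₜ (ℝ × ℝ)} (hS : commuting F S2)
    (hT : commuting F T2) {K : Set (ℝ × ℝ)} (hK : IsCompact K) :
    ∃ D C : ℝ, 0 ≤ D ∧ 0 ≤ C ∧ ∀ a b c : ℤ, (act S2 T2 F a b c '' K ∩ K).Nonempty →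
      ‖((a : ℝ), (b : ℝ))‖ ≤ |(c : ℝ)| * D + C := by
  obtain ⟨D, hD⟩ := exists_norm_apply_sub_le hS hT
  obtain ⟨R, hR, hKR⟩ := hK.isBounded.exists_pos_norm_le
  refine ⟨D, 2 * R, (norm_nonneg _).trans (hD 0), by positivity, ?_⟩
  rintro a b c ⟨y, ⟨x, hxK, rfl⟩, hyK⟩
  rw [act_S2_T2_apply] at hyK
  set y := (F ^ c) x - ((a : ℝ), (b : ℝ))
  calc ‖((a : ℝ), (b : ℝ))‖ = ‖((F ^ c) x - x) - (y - x)‖ := by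
        rw [sub_sub_sub_cancel_right, sub_sub_cancel]
    _ ≤ ‖(F ^ c) x - x‖ + (‖y‖ + ‖x‖) := (norm_sub_le _ _).trans (by gcongr; exact norm_sub_le _ _)
    _ ≤ |(c : ℝ)| * D + (R + R) := by
        gcongr
        exacts [norm_zpow_apply_sub_le F hD c x, hKR y hyK, hKR x hxK]
    _ = |(c : ℝ)| * D + 2 * R := by ring

/-- `(m/p, n/p)` for `v = (m, n, p)`, with the junk value `(0, 0)` when `p = 0`. -/
def ratio (v : ℤ × ℤ × ℤ) : ℝ × ℝ := ((v.1 : ℝ) / v.2.2, (v.2.1 : ℝ) / v.2.2)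

lemma mem_rotSet_iff {X : Type*} [TopologicalSpace X] {G U V : X ≃ₜ X} {w : ℝ × ℝ} :
    w ∈ rotSet G U V ↔ ∃ K : Set X, IsCompact K ∧ ∃ s : ℕ → ℤ × ℤ × ℤ,
      (∀ k, (actVec U V G (s k) '' K ∩ K).Nonempty) ∧ tendsInfty s ∧
      Tendsto (fun k => ratio (s k)) atTop (𝓝 w) :=
  Iff.rfl

lemma exists_norm_ratio_le {F : (ℝ × ℝ) ≃ₜ (ℝ × ℝ)} (hS : commuting F S2) (hT : commuting F T2)
    {K : Set (ℝ × ℝ)} (hK : IsCompact K) :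
    ∃ C, ∀ v : ℤ × ℤ × ℤ, (actVec S2 T2 F v '' K ∩ K).Nonempty → ‖ratio v‖ ≤ C := by
  obtain ⟨D, C, hD, hC, hbound⟩ := exists_norm_le_of_returns hS hT hK
  refine ⟨D + C, fun ⟨a, b, c⟩ hv => ?_⟩
  rcases eq_or_ne c 0 with rfl | hc
  · simp [ratio]; positivity
  have hc1 : (1 : ℝ) ≤ |(c : ℝ)| := by exact_mod_cast Int.one_le_abs hc
  have hratio : ratio (a, b, c) = (c : ℝ)⁻¹ • ((a : ℝ), (b : ℝ)) := by
    ext <;> simp [ratio, div_eq_inv_mul]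
  rw [hratio, norm_smul, norm_inv, Real.norm_eq_abs, inv_mul_le_iff₀ (by positivity)]
  calc _ ≤ |(c : ℝ)| * D + C := hbound a b c hv
    _ ≤ |(c : ℝ)| * (D + C) := by nlinarith

lemma eventually_snd_snd_ne_zero {F : (ℝ × ℝ) ≃ₜ (ℝ × ℝ)} (hS : commuting F S2)
    (hT : commuting F T2) {K : Set (ℝ × ℝ)} (hK : IsCompact K) {s : ℕ → ℤ × ℤ × ℤ}
    (hret : ∀ k, (actVec S2 T2 F (s k) '' K ∩ K).Nonempty)
    (hs : tendsInfty s) : ∀ᶠ k in atTop, (s k).2.2 ≠ 0 := by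
  obtain ⟨D, C, -, -, hbound⟩ := exists_norm_le_of_returns hS hT hK
  filter_upwards [hs.eventually_gt_atTop ⌈2 * C⌉] with k hk hc
  have hab := hbound _ _ _ (hret k)
  rw [hc, Int.cast_zero, abs_zero, zero_mul, zero_add] at hab
  have ha := (norm_fst_le (((s k).1 : ℝ), ((s k).2.1 : ℝ))).trans hab
  have hb := (norm_snd_le (((s k).1 : ℝ), ((s k).2.1 : ℝ))).trans hab
  rw [hc, abs_zero, add_zero, Int.ceil_lt_iff] at hk
  rw [Real.norm_eq_abs] at ha hb
  push_cast at hk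
  linarith

lemma tendsInfty_iff_tendsto_cofinite {s : ℕ → ℤ × ℤ × ℤ} :
    tendsInfty s ↔ Tendsto s atTop cofinite := by
  set N : ℤ × ℤ × ℤ → ℤ := fun v => |v.1| + |v.2.1| + |v.2.2|
  have hN : Tendsto N cofinite atTop := by
    refine tendsto_atTop.2 fun b => eventually_cofinite.2 <|
      (Set.finite_Icc (-b, -b, -b) (b, b, b)).subset fun v hv => ?_
    simp only [Set.mem_ofPred_eq, not_le, N] at hv
    refine ⟨⟨?_, ?_, ?_⟩, ?_, ?_, ?_⟩ <;> linarith [abs_nonneg v.1, abs_nonneg v.2.1,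
      abs_nonneg v.2.2, neg_abs_le v.1, neg_abs_le v.2.1, neg_abs_le v.2.2, le_abs_self v.1,
      le_abs_self v.2.1, le_abs_self v.2.2]
  refine ⟨fun hs => le_cofinite_iff_eventually_ne.2 fun v => eventually_map.2 ?_, hN.comp⟩
  filter_upwards [hs.eventually_gt_atTop (N v)] with k hk hkv
  exact hk.ne (by rw [hkv])

lemma tendsInfty.comp_injective {s : ℕ → ℤ × ℤ × ℤ} (hs : tendsInfty s)
    {f : ℤ × ℤ × ℤ → ℤ × ℤ × ℤ} (hf : Function.Injective f) : tendsInfty (f ∘ s) :=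
  tendsInfty_iff_tendsto_cofinite.2 <|
    hf.tendsto_cofinite.comp (tendsInfty_iff_tendsto_cofinite.1 hs)

lemma lhatZ_ratio (L : Matrix (Fin 3) (Fin 3) ℤ) {v : ℤ × ℤ × ℤ} (hv : v.2.2 ≠ 0) :
    lhatZ L (ratio v) = ratio (mulVec3 L v) := by
  have hv' : (v.2.2 : ℝ) ≠ 0 := Int.cast_ne_zero.2 hv
  have hrow : ∀ i, (L i 0 : ℝ) * (v.1 / v.2.2) + L i 1 * (v.2.1 / v.2.2) + L i 2 =
      ((L i 0 * v.1 + L i 1 * v.2.1 + L i 2 * v.2.2 : ℤ) : ℝ) / v.2.2 := fun i => by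
    push_cast; field_simp
  simp only [lhatZ, ratio, mulVec3, hrow, div_div_div_cancel_right₀ hv']

lemma continuousAt_lhatZ (L : Matrix (Fin 3) (Fin 3) ℤ) {w : ℝ × ℝ}
    (hw : (L 2 0 : ℝ) * w.1 + (L 2 1 : ℝ) * w.2 + (L 2 2 : ℝ) ≠ 0) : ContinuousAt (lhatZ L) w := by
  unfold lhatZ
  fun_prop (disch := exact hw)

lemma tendsto_ratio_mulVec3 {F : (ℝ × ℝ) ≃ₜ (ℝ × ℝ)} (hS : commuting F S2) (hT : commuting F T2)
    (L : Matrix (Fin 3) (Fin 3) ℤ) {K : Set (ℝ × ℝ)} (hK : IsCompact K) {s : ℕ → ℤ × ℤ × ℤ}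
    (hret : ∀ k, (actVec S2 T2 F (s k) '' K ∩ K).Nonempty)
    (hs : tendsInfty s) {w : ℝ × ℝ} (hw : Tendsto (fun k => ratio (s k)) atTop (𝓝 w))
    (hden : (L 2 0 : ℝ) * w.1 + (L 2 1 : ℝ) * w.2 + (L 2 2 : ℝ) ≠ 0) :
    Tendsto (fun k => ratio (mulVec3 L (s k))) atTop (𝓝 (lhatZ L w)) :=
  ((continuousAt_lhatZ L hden).tendsto.comp hw).congr' <|
    (eventually_snd_snd_ne_zero hS hT hK hret hs).mono fun _ hk => lhatZ_ratio L hk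

lemma lhatZ_image_rotSet_subset {F : (ℝ × ℝ) ≃ₜ (ℝ × ℝ)} (hS : commuting F S2)
    (hT : commuting F T2) {L M : Matrix (Fin 3) (Fin 3) ℤ} (hML : M * L = 1)
    (hdisj : ∀ w ∈ rotSet F S2 T2, (L 2 0 : ℝ) * w.1 + (L 2 1 : ℝ) * w.2 + (L 2 2 : ℝ) ≠ 0)
    {U V G : (ℝ × ℝ) ≃ₜ (ℝ × ℝ)}
    (hact : ∀ v, actVec U V G v = actVec S2 T2 F (mulVec3 M v)) :
    lhatZ L '' rotSet F S2 T2 ⊆ rotSet G U V := by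
  rintro _ ⟨w, hw, rfl⟩
  obtain ⟨K, hK, s, hret, hs, hlim⟩ := mem_rotSet_iff.1 hw
  have hMLv : Function.LeftInverse (mulVec3 M) (mulVec3 L) := fun v => by
    rw [mulVec3_mulVec3, hML, mulVec3_one]
  refine mem_rotSet_iff.2 ⟨K, hK, mulVec3 L ∘ s, fun k => ?_, hs.comp_injective hMLv.injective,
    tendsto_ratio_mulVec3 hS hT L hK hret hs hlim (hdisj w hw)⟩
  simpa only [Function.comp_apply, hact, hMLv (s k)] using hret k

lemma rotSet_subset_lhatZ_image {F : (ℝ × ℝ) ≃ₜ (ℝ × ℝ)} (hS : commuting F S2)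
    (hT : commuting F T2) {L M : Matrix (Fin 3) (Fin 3) ℤ} (hLM : L * M = 1)
    (hdisj : ∀ w ∈ rotSet F S2 T2, (L 2 0 : ℝ) * w.1 + (L 2 1 : ℝ) * w.2 + (L 2 2 : ℝ) ≠ 0)
    {U V G : (ℝ × ℝ) ≃ₜ (ℝ × ℝ)}
    (hact : ∀ v, actVec U V G v = actVec S2 T2 F (mulVec3 M v)) :
    rotSet G U V ⊆ lhatZ L '' rotSet F S2 T2 := by
  intro w hw
  obtain ⟨K, hK, s, hret, hs, hlim⟩ := mem_rotSet_iff.1 hw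
  have hLMv : Function.LeftInverse (mulVec3 L) (mulVec3 M) := fun v => by
    rw [mulVec3_mulVec3, hLM, mulVec3_one]
  set t := mulVec3 M ∘ s
  have hretF : ∀ k, (actVec S2 T2 F (t k) '' K ∩ K).Nonempty := fun k =>
    hact (s k) ▸ hret k
  have ht : tendsInfty t := hs.comp_injective hLMv.injective
  obtain ⟨C, hC⟩ := exists_norm_ratio_le hS hT hK
  obtain ⟨w', -, φ, hφ, hlim'⟩ := tendsto_subseq_of_bounded (Metric.isBounded_closedBall (x := 0))
    fun k => mem_closedBall_zero_iff.2 (hC _ (hretF k))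
  have hw' : w' ∈ rotSet F S2 T2 :=
    mem_rotSet_iff.2 ⟨K, hK, t ∘ φ, fun k => hretF (φ k), ht.comp hφ.tendsto_atTop, hlim'⟩
  refine ⟨w', hw', tendsto_nhds_unique ?_ (hlim.comp hφ.tendsto_atTop)⟩
  simpa only [t, Function.comp_def, hLMv _] using tendsto_ratio_mulVec3 hS hT L hK
    (fun k => hretF (φ k)) (ht.comp hφ.tendsto_atTop) hlim' (hdisj w' hw')

theorem stmt10_general (F : (ℝ × ℝ) ≃ₜ (ℝ × ℝ)) (hS : commuting F S2) (hT : commuting F T2)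
    (L M : Matrix (Fin 3) (Fin 3) ℤ) (hLM : L * M = 1) (hML : M * L = 1)
    (hdisj : ∀ w ∈ rotSet F S2 T2,
      (L 2 0 : ℝ) * w.1 + (L 2 1 : ℝ) * w.2 + (L 2 2 : ℝ) ≠ 0)
    (U V G : (ℝ × ℝ) ≃ₜ (ℝ × ℝ))
    (hU : U = mk2 F (M 0 0) (M 1 0) (M 2 0)) (hV : V = mk2 F (M 0 1) (M 1 1) (M 2 1))
    (hG : G = mk2 F (-(M 0 2)) (-(M 1 2)) (-(M 2 2))) :
    rotSet G U V = lhatZ L '' rotSet F S2 T2 := by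
  have hact : ∀ v, actVec U V G v = actVec S2 T2 F (mulVec3 M v) := by
    subst hU hV hG
    exact actVec_mk2 F hS hT M
  exact (rotSet_subset_lhatZ_image hS hT hLM hdisj hact).antisymm
    (lhatZ_image_rotSet_subset hS hT hML hdisj hact)

/-- `ρ_{U,V}(G) = 𝐿̂(ρ_{S,T}(F))` when `ρ_{S,T}(F)` avoids `Φ L⁻¹(Δ_∞)`. -/
theorem stmt10 (F : (ℝ × ℝ) ≃ₜ (ℝ × ℝ)) (hS : commuting F S2) (hT : commuting F T2)
    (L M : Matrix (Fin 3) (Fin 3) ℤ) (hdet : L.det = 1) (hLM : L * M = 1) (hML : M * L = 1)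
    (hdisj : ∀ w ∈ rotSet F S2 T2,
      (L 2 0 : ℝ) * w.1 + (L 2 1 : ℝ) * w.2 + (L 2 2 : ℝ) ≠ 0)
    (U V G : (ℝ × ℝ) ≃ₜ (ℝ × ℝ))
    (hU : U = mk2 F (M 0 0) (M 1 0) (M 2 0)) (hV : V = mk2 F (M 0 1) (M 1 1) (M 2 1))
    (hG : G = mk2 F (-(M 0 2)) (-(M 1 2)) (-(M 2 2))) :
    rotSet G U V = lhatZ L '' rotSet F S2 T2 :=
  stmt10_general F hS hT L M hLM hML hdisj U V G hU hV hG
end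
end

section
/- Let F be a homeomorphism of ℝ² commuting with the unit translations S and T. Then the rotation set ρ_{S,T}(F) (defined via compact sets) is nonempty and bounded. -/
open Filter Topology Pointwise

noncomputable section

/-!
Since `F` commutes with the unit translations, the displacement `z ↦ F z - z` is `ℤ²`-periodic,
so `disp F` is the image of the unit square, hence compact; let `C` bound its norm. Then
`‖F^p z - z‖ ≤ |p| C`, so if `S^{-m} T^{-n} F^p` maps a point of a compact `K ⊆ B(0, R)` into `K`,
then `‖(m, n)‖ ≤ |p| C + 2R`. Along a sequence tending to infinity this forces `|p| → ∞`, and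
every limit of `(m, n) / p` lies in the closed ball of radius `C`. For nonemptiness take `K` the
unit square, `p = k + 1` and `(m, n)` the integer part of `F^{k+1}(0)`: the ratios stay in a
compact ball, and a convergent subsequence yields a point of the rotation set.
-/

open Metric

section Iterates

variable {X : Type*} [TopologicalSpace X] {F G : X ≃ₜ X}

theorem commuting.hnpow (h : commuting F G) (n : ℕ) : commuting F (hnpow G n) := by
  induction n with
  | zero => exact fun _ => rfl
  | succ n ih => exact fun x => (h _).trans (congrArg G (ih x))

theorem commuting.symm_right (h : commuting F G) : commuting F G.symm := fun x =>
  G.injective <| by rw [← h, G.apply_symm_apply, G.apply_symm_apply]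

theorem commuting.hzpow (h : commuting F G) : ∀ m : ℤ, commuting F (hzpow G m)
  | Int.ofNat n => h.hnpow n
  | Int.negSucc n => h.symm_right.hnpow (n + 1)

end Iterates

section Translations

variable {A : Type*} [TopologicalSpace A] [AddGroup A] [IsTopologicalAddGroup A]

theorem hnpow_addRight_apply (v : A) (n : ℕ) (x : A) :
    hnpow (Homeomorph.addRight v) n x = x + n • v := by
  induction n with
  | zero => simp [hnpow]
  | succ n ih =>
    change hnpow (Homeomorph.addRight v) n x + v = _
    rw [ih, succ_nsmul, add_assoc]

theorem hzpow_addRight_apply (v : A) (m : ℤ) (x : A) :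
    hzpow (Homeomorph.addRight v) m x = x + m • v := by
  cases m with
  | ofNat n =>
    change hnpow _ n x = _
    simp [hnpow_addRight_apply]
  | negSucc n =>
    change hnpow (Homeomorph.addRight v).symm (n + 1) x = _
    rw [Homeomorph.addRight_symm, hnpow_addRight_apply, Int.negSucc_eq, neg_zsmul, neg_nsmul]
    norm_cast

end Translations

theorem hzpow_S2_apply (m : ℤ) (x : ℝ × ℝ) : hzpow S2 m x = x + ((m : ℝ), 0) := by
  simp [S2, hzpow_addRight_apply]

theorem hzpow_T2_apply (n : ℤ) (x : ℝ × ℝ) : hzpow T2 n x = x + (0, (n : ℝ)) := by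
  simp [T2, hzpow_addRight_apply]

theorem act_S2_T2_apply_s14 (F : (ℝ × ℝ) ≃ₜ (ℝ × ℝ)) (m n p : ℤ) (x : ℝ × ℝ) :
    act S2 T2 F m n p x = hzpow F p x - ((m : ℝ), (n : ℝ)) := by
  change hzpow S2 (-m) (hzpow T2 (-n) (hzpow F p x)) = _
  ext <;> simp [hzpow_S2_apply, hzpow_T2_apply, sub_eq_add_neg]

theorem map_add_intCast_prod {F : (ℝ × ℝ) ≃ₜ (ℝ × ℝ)} (hS : commuting F S2) (hT : commuting F T2)
    (m n : ℤ) (x : ℝ × ℝ) : F (x + ((m : ℝ), (n : ℝ))) = F x + ((m : ℝ), (n : ℝ)) := by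
  have hmn : ∀ y : ℝ × ℝ, y + ((m : ℝ), (n : ℝ)) = hzpow S2 m (hzpow T2 n y) := fun y => by
    ext <;> simp [hzpow_S2_apply, hzpow_T2_apply]
  rw [hmn, hmn, hS.hzpow, hT.hzpow]

theorem sub_floor_mem_Icc (z : ℝ × ℝ) :
    z - ((⌊z.1⌋ : ℝ), (⌊z.2⌋ : ℝ)) ∈ Set.Icc (0 : ℝ × ℝ) 1 := by
  refine ⟨⟨?_, ?_⟩, ⟨?_, ?_⟩⟩ <;>
    simp [Int.fract_nonneg, (Int.fract_lt_one _).le]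

theorem norm_le_one_of_mem_Icc {z : ℝ × ℝ} (hz : z ∈ Set.Icc (0 : ℝ × ℝ) 1) : ‖z‖ ≤ 1 := by
  obtain ⟨⟨h₁, h₂⟩, ⟨h₃, h₄⟩⟩ := hz
  simp only [Prod.fst_zero, Prod.snd_zero, Prod.fst_one, Prod.snd_one] at h₁ h₂ h₃ h₄
  rw [Prod.norm_def, Real.norm_of_nonneg h₁, Real.norm_of_nonneg h₂]
  exact max_le h₃ h₄

theorem disp_eq_image_Icc {F : (ℝ × ℝ) ≃ₜ (ℝ × ℝ)} (hS : commuting F S2) (hT : commuting F T2) :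
    disp F = (fun z => F z - z) '' Set.Icc 0 1 := by
  refine subset_antisymm ?_ (Set.image_subset_range _ _)
  rintro _ ⟨z, rfl⟩
  refine ⟨_, sub_floor_mem_Icc z, ?_⟩
  have := map_add_intCast_prod hS hT ⌊z.1⌋ ⌊z.2⌋ (z - ((⌊z.1⌋ : ℝ), (⌊z.2⌋ : ℝ)))
  rw [sub_add_cancel] at this
  simp only [this]
  abel

theorem isCompact_disp {F : (ℝ × ℝ) ≃ₜ (ℝ × ℝ)} (hS : commuting F S2) (hT : commuting F T2) :
    IsCompact (disp F) := by
  rw [disp_eq_image_Icc hS hT]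
  exact isCompact_Icc.image (F.continuous.sub continuous_id)

section DisplacementBound

variable {E : Type*} [SeminormedAddGroup E] {G : E ≃ₜ E} {C : ℝ}

theorem norm_hnpow_sub_le (h : ∀ z, ‖G z - z‖ ≤ C) (n : ℕ) (z : E) :
    ‖hnpow G n z - z‖ ≤ n * C := by
  induction n with
  | zero => simp [hnpow]
  | succ n ih =>
    calc ‖G (hnpow G n z) - z‖ ≤ ‖G (hnpow G n z) - hnpow G n z‖ + ‖hnpow G n z - z‖ :=
          norm_sub_le_norm_sub_add_norm_sub _ _ _
      _ ≤ C + n * C := add_le_add (h _) ih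
      _ = (n + 1 : ℕ) * C := by push_cast; ring

theorem norm_symm_sub_le (h : ∀ z, ‖G z - z‖ ≤ C) (z : E) : ‖G.symm z - z‖ ≤ C := by
  simpa [norm_sub_rev] using h (G.symm z)

theorem norm_hzpow_sub_le (h : ∀ z, ‖G z - z‖ ≤ C) (p : ℤ) (z : E) :
    ‖hzpow G p z - z‖ ≤ |(p : ℝ)| * C := by
  cases p with
  | ofNat n =>
    change ‖hnpow G n z - z‖ ≤ _
    simpa using norm_hnpow_sub_le h n z
  | negSucc n =>
    rw [Int.cast_negSucc, abs_neg, abs_of_nonneg (by positivity)]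
    exact_mod_cast norm_hnpow_sub_le (norm_symm_sub_le h) (n + 1) z

end DisplacementBound

theorem norm_ratio_eq (m n p : ℤ) :
    ‖(((m : ℝ) / p, (n : ℝ) / p) : ℝ × ℝ)‖ = ‖((m : ℝ), (n : ℝ))‖ / |(p : ℝ)| := by
  rw [show (((m : ℝ) / p, (n : ℝ) / p) : ℝ × ℝ) = (p : ℝ)⁻¹ • ((m : ℝ), (n : ℝ)) by
    simp [div_eq_inv_mul], norm_smul, norm_inv, Real.norm_eq_abs, inv_mul_eq_div]

theorem rotSet_nonempty_of_ratio_mem {X : Type*} [TopologicalSpace X] {G U V : X ≃ₜ X}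
    {K : Set X} (hK : IsCompact K) {s : ℕ → ℤ × ℤ × ℤ}
    (hsK : ∀ k, ((act U V G (s k).1 (s k).2.1 (s k).2.2) '' K ∩ K).Nonempty)
    (hs : tendsInfty s) {Q : Set (ℝ × ℝ)} (hQ : IsCompact Q)
    (hsQ : ∀ k, (((s k).1 : ℝ) / (s k).2.2, ((s k).2.1 : ℝ) / (s k).2.2) ∈ Q) :
    (rotSet G U V).Nonempty := by
  obtain ⟨w, -, φ, hφ, hlim⟩ := hQ.tendsto_subseq hsQ
  exact ⟨w, K, hK, s ∘ φ, fun k => hsK (φ k), hs.comp hφ.tendsto_atTop, hlim⟩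

theorem rotSet_nonempty {F : (ℝ × ℝ) ≃ₜ (ℝ × ℝ)} {C : ℝ} (hC : ∀ z, ‖F z - z‖ ≤ C) :
    (rotSet F S2 T2).Nonempty := by
  set u : ℕ → ℝ × ℝ := fun k => hzpow F ((k : ℤ) + 1) 0
  refine rotSet_nonempty_of_ratio_mem isCompact_Icc (s := fun k => (⌊(u k).1⌋, ⌊(u k).2⌋, k + 1))
    (fun k => ⟨_, ⟨0, ⟨le_rfl, zero_le_one⟩, rfl⟩, ?_⟩) ?_
    (isCompact_closedBall (0 : ℝ × ℝ) (C + 1)) fun k => ?_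
  · simpa [act_S2_T2_apply_s14] using sub_floor_mem_Icc (u k)
  · refine tendsto_atTop_mono (fun k => ?_) (tendsto_natCast_atTop_atTop (R := ℤ))
    dsimp only
    have := abs_nonneg ⌊(u k).1⌋
    have := abs_nonneg ⌊(u k).2⌋
    rw [abs_of_nonneg (by positivity : (0 : ℤ) ≤ k + 1)]
    omega
  · have hk : (0 : ℝ) < k + 1 := by positivity
    have hu : ‖u k‖ ≤ (k + 1) * C := by
      simpa [abs_of_pos hk] using norm_hzpow_sub_le hC ((k : ℤ) + 1) 0
    have hfloor : ‖((⌊(u k).1⌋ : ℝ), (⌊(u k).2⌋ : ℝ))‖ ≤ ‖u k‖ + 1 :=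
      calc ‖((⌊(u k).1⌋ : ℝ), (⌊(u k).2⌋ : ℝ))‖
          = ‖u k - (u k - ((⌊(u k).1⌋ : ℝ), (⌊(u k).2⌋ : ℝ)))‖ := by rw [sub_sub_cancel]
        _ ≤ ‖u k‖ + 1 :=
          (norm_sub_le _ _).trans (add_le_add le_rfl (norm_le_one_of_mem_Icc (sub_floor_mem_Icc _)))
    rw [mem_closedBall_zero_iff, norm_ratio_eq]
    push_cast
    rw [abs_of_pos hk, div_le_iff₀ hk]
    nlinarith

theorem norm_intCast_prod_le_of_act {F : (ℝ × ℝ) ≃ₜ (ℝ × ℝ)} {C R : ℝ}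
    (hC : ∀ z, ‖F z - z‖ ≤ C) {m n p : ℤ} {x : ℝ × ℝ} (hx : ‖x‖ ≤ R)
    (hy : ‖act S2 T2 F m n p x‖ ≤ R) : ‖((m : ℝ), (n : ℝ))‖ ≤ |(p : ℝ)| * C + 2 * R := by
  rw [act_S2_T2_apply_s14] at hy
  calc ‖((m : ℝ), (n : ℝ))‖
      = ‖(hzpow F p x - x) + (x - (hzpow F p x - ((m : ℝ), (n : ℝ))))‖ := by abel_nf
    _ ≤ |(p : ℝ)| * C + (R + R) :=
      (norm_add_le _ _).trans (add_le_add (norm_hzpow_sub_le hC p x) ((norm_sub_le _ _).trans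
        (add_le_add hx hy)))
    _ = |(p : ℝ)| * C + 2 * R := by ring

theorem tendsInfty.tendsto_abs_of_norm_le {s : ℕ → ℤ × ℤ × ℤ} (hs : tendsInfty s) {C B : ℝ}
    (hC : 0 ≤ C) (h : ∀ k, ‖(((s k).1 : ℝ), ((s k).2.1 : ℝ))‖ ≤ |((s k).2.2 : ℝ)| * C + B) :
    Tendsto (fun k => |((s k).2.2 : ℝ)|) atTop atTop := by
  have hsum : Tendsto (fun k => |((s k).1 : ℝ)| + |((s k).2.1 : ℝ)| + |((s k).2.2 : ℝ)|)
      atTop atTop := by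
    simpa [Function.comp_def, Int.cast_abs] using (tendsto_intCast_atTop_atTop (R := ℝ)).comp hs
  have hC' : 0 < 2 * C + 1 := by linarith
  refine tendsto_atTop_mono (fun k => ?_)
    ((tendsto_atTop_add_const_right _ (-(2 * B)) hsum).atTop_div_const hC')
  have h₁ := (norm_fst_le (((s k).1 : ℝ), ((s k).2.1 : ℝ))).trans (h k)
  have h₂ := (norm_snd_le (((s k).1 : ℝ), ((s k).2.1 : ℝ))).trans (h k)
  rw [Real.norm_eq_abs] at h₁ h₂
  have hle : |((s k).1 : ℝ)| + |((s k).2.1 : ℝ)| + |((s k).2.2 : ℝ)|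
      ≤ (2 * C + 1) * |((s k).2.2 : ℝ)| + 2 * B := by linarith
  rw [div_le_iff₀ hC']
  linarith

theorem rotSet_subset_closedBall {F : (ℝ × ℝ) ≃ₜ (ℝ × ℝ)} {C : ℝ} (hC : ∀ z, ‖F z - z‖ ≤ C) :
    rotSet F S2 T2 ⊆ closedBall 0 C := by
  rintro w ⟨K, hK, s, hsK, hs, hlim⟩
  obtain ⟨R, hR⟩ := hK.isBounded.exists_norm_le
  have hmn : ∀ k, ‖(((s k).1 : ℝ), ((s k).2.1 : ℝ))‖ ≤ |((s k).2.2 : ℝ)| * C + 2 * R := fun k => by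
    obtain ⟨_, ⟨x, hx, rfl⟩, hy⟩ := hsK k
    exact norm_intCast_prod_le_of_act hC (hR x hx) (hR _ hy)
  have hp := hs.tendsto_abs_of_norm_le ((norm_nonneg _).trans (hC 0)) hmn
  have hratio : ∀ᶠ k in atTop, ‖(((s k).1 : ℝ) / (s k).2.2, ((s k).2.1 : ℝ) / (s k).2.2)‖
      ≤ C + 2 * R / |((s k).2.2 : ℝ)| := by
    filter_upwards [hp.eventually_gt_atTop 0] with k hk
    rw [norm_ratio_eq, div_le_iff₀ hk, add_mul, div_mul_cancel₀ _ hk.ne', mul_comm C]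
    exact hmn k
  have hbound : Tendsto (fun k => C + 2 * R / |((s k).2.2 : ℝ)|) atTop (𝓝 C) := by
    simpa using tendsto_const_nhds.add (tendsto_const_nhds.div_atTop hp)
  exact mem_closedBall_zero_iff.2 (le_of_tendsto_of_tendsto hlim.norm hbound hratio)

/-- the rotation set of a lift of a torus homeomorphism is nonempty and bounded. -/
theorem stmt14 (F : (ℝ × ℝ) ≃ₜ (ℝ × ℝ)) (hS : commuting F S2) (hT : commuting F T2) :
    (rotSet F S2 T2).Nonempty ∧ Bornology.IsBounded (rotSet F S2 T2) := by
  obtain ⟨C, hC⟩ := (isCompact_disp hS hT).isBounded.exists_norm_le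
  have hFC : ∀ z, ‖F z - z‖ ≤ C := fun z => hC _ ⟨z, rfl⟩
  exact ⟨rotSet_nonempty hFC, isBounded_closedBall.subset (rotSet_subset_closedBall hFC)⟩
end
end
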